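/- The generating functions sum over π ∈ PF(1,b,m) of y^{lel(π)} and sum over π ∈ PF(1,b,m) of x^{ones(π)} are both equal to t(t + mb)^{m-1} (in the respective variable t). -/

import Mathlib

/-!
For `q`-parking functions with values in `ZMod (q + m * b)`, the cycle lemma says that exactly
`q` of the `q + m * b` constant shifts of any function are `q`-parking. Along a progression of
step `b`, the good shifts are exactly the strict descents of the running maximum of the potential
`y ↦ b * #(points ≤ y) - y`, and this maximum drops by `q * b` over a period.

Since constant shifts preserve `lel`, averaging over shift orbits (with `q = 1`) turns the `lel`
sum into a sum over all functions, which factorises. Lowering the values of a `q`-parking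
function by `q - 1` gives a `(1, b)`-parking function `π` with exactly `q ^ ones π` preimages, so
the `ones` generating function agrees with `q (q + m b) ^ (m - 1)` at every natural number `q`,
hence identically.
-/

/-- The finite set of `(1,b)`-parking functions of length `m`, encoded as
functions `Fin m → Fin (1 + (m-1)*b)`, where the value of car `k` is
`(π k : ℕ) + 1`. -/
def abpf1 (b m : ℕ) : Finset (Fin m → Fin (1 + (m - 1) * b)) :=
  Finset.univ.filter (fun π =>
    ∀ i : Fin m,
      (i : ℕ) + 1 ≤ (Finset.univ.filter (fun k => (π k : ℕ) + 1 ≤ 1 + (i : ℕ) * b)).card)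

namespace ParkingFunction

open Finset

section CycleLemma

variable {m : ℕ}

/-- The counting function of the periodic point set `{n * M - a j | n ≥ 1}`. -/
def liftCount (M : ℕ) (a : Fin m → ℕ) (y : ℕ) : ℕ := ∑ j, (a j + y) / M

theorem liftCount_add_mul {M : ℕ} (hM : 0 < M) (a : Fin m → ℕ) (y k : ℕ) :
    liftCount M a (y + k * M) = liftCount M a y + k * m := by
  simp only [liftCount, ← add_assoc, Nat.add_mul_div_right _ _ hM, sum_add_distrib]
  simp [mul_comm]

theorem liftCount_mono (M : ℕ) (a : Fin m → ℕ) : Monotone (liftCount M a) :=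
  fun _ _ h => sum_le_sum fun _ _ => Nat.div_le_div_right (by omega)

theorem add_div_eq_add_ite {A u M : ℕ} (hM : 0 < M) (hu : u ≤ M) :
    (A + u) / M = A / M + if M ≤ A % M + u then 1 else 0 := by
  rw [Nat.add_div hM]
  rcases hu.lt_or_eq with hu | rfl
  · simp [Nat.div_eq_of_lt hu, Nat.mod_eq_of_lt hu]
  · simp [(Nat.mod_lt A hM).not_ge, Nat.div_self hM]

theorem liftCount_add {M : ℕ} (hM : 0 < M) (a : Fin m → ℕ) (y : ℕ) {u : ℕ}
    (hu : u ≤ M) :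
    liftCount M a (y + u) = liftCount M a y + #{j | M ≤ (a j + y) % M + u} := by
  simp only [liftCount, ← add_assoc, add_div_eq_add_ite hM hu, sum_add_distrib, card_filter]

variable (b x : ℕ) (a : Fin m → ℕ)

/-- Every window `(d, d + t * b]` with `1 ≤ t ≤ m` contains fewer than `t` points. -/
def IsGoodStart (d : ℕ) : Prop :=
  ∀ t, 1 ≤ t → t ≤ m → liftCount (x + m * b) a (d + t * b) < liftCount (x + m * b) a d + t

def potential (y : ℕ) : ℤ := b * liftCount (x + m * b) a y - y

noncomputable instance : DecidablePred (IsGoodStart b x a) := Classical.decPred _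

def maxPotential (y : ℕ) : ℤ :=
  (range (x + m * b + 1)).sup' nonempty_range_add_one fun t => potential b x a (y + t * b)

theorem exists_maxPotential_eq (y : ℕ) :
    ∃ t, maxPotential b x a y = potential b x a (y + t * b) :=
  let ⟨t, _, ht⟩ :=
    exists_mem_eq_sup' nonempty_range_add_one fun t => potential b x a (y + t * b)
  ⟨t, ht⟩

theorem potential_le_potential_add (y : ℕ) :
    potential b x a y ≤ potential b x a (y + b) + b := by
  have h : (liftCount (x + m * b) a y : ℤ) ≤ liftCount (x + m * b) a (y + b) := by
    exact_mod_cast liftCount_mono _ a (Nat.le_add_right y b)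
  simp only [potential]
  push_cast
  nlinarith

variable {b x a}

theorem potential_add_period (hN : 0 < x + m * b) (y : ℕ) :
    potential b x a (y + b * (x + m * b)) = potential b x a y - b * x := by
  simp only [potential, liftCount_add_mul hN]
  push_cast
  ring

theorem potential_add_mul_le (hN : 0 < x + m * b) (y : ℕ) :
    potential b x a (y + m * b) ≤ potential b x a y := by
  have h := liftCount_mono (x + m * b) a (show y + m * b ≤ y + 1 * (x + m * b) by omega)
  rw [liftCount_add_mul hN] at h
  have h' : (liftCount (x + m * b) a (y + m * b) : ℤ) ≤ liftCount (x + m * b) a y + m := by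
    exact_mod_cast h.trans_eq (by ring)
  simp only [potential]
  push_cast
  nlinarith

theorem potential_add_le_iff (hb : 0 < b) (d t : ℕ) :
    potential b x a (d + t * b) + b ≤ potential b x a d ↔
      liftCount (x + m * b) a (d + t * b) < liftCount (x + m * b) a d + t := by
  have hb' : (0 : ℤ) < b := by exact_mod_cast hb
  have key : potential b x a (d + t * b) + b ≤ potential b x a d ↔
      (b : ℤ) * (liftCount (x + m * b) a (d + t * b) + 1) ≤
        b * (liftCount (x + m * b) a d + t) := by
    rw [potential, potential]
    push_cast
    constructor <;> intro h <;> linarith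
  rw [key, mul_le_mul_iff_of_pos_left hb']
  omega

theorem isGoodStart_iff_potential (hb : 0 < b) (hN : 0 < x + m * b) (d : ℕ) :
    IsGoodStart b x a d ↔
      ∀ t, 1 ≤ t → potential b x a (d + t * b) + b ≤ potential b x a d := by
  refine ⟨fun h t => ?_, fun h t ht _ => (potential_add_le_iff hb d t).1 (h t ht)⟩
  induction t using Nat.strong_induction_on with
  | _ t ih =>
    intro ht
    rcases le_or_gt t m with htm | htm
    · exact (potential_add_le_iff hb d t).2 (h t ht htm)
    · -- the window of length `t * b` contains that of length `(t - m) * b` plus at most `m` points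
      rcases Nat.eq_zero_or_pos m with rfl | hm
      · exact (potential_add_le_iff hb d t).2 (by simp [liftCount]; omega)
      have hle := potential_add_mul_le (a := a) hN (d + (t - m) * b)
      rw [add_assoc, ← add_mul, Nat.sub_add_cancel htm.le] at hle
      linarith [ih (t - m) (by omega) (by omega)]

theorem potential_le_maxPotential (hN : 0 < x + m * b) (y t : ℕ) :
    potential b x a (y + t * b) ≤ maxPotential b x a y := by
  induction t using Nat.strong_induction_on with
  | _ t ih =>
    rcases lt_or_ge t (x + m * b + 1) with ht | ht
    · exact le_sup' (fun t => potential b x a (y + t * b)) (mem_range.2 ht)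
    · obtain ⟨s, rfl⟩ : ∃ s, t = s + (x + m * b) := ⟨t - (x + m * b), by omega⟩
      have h := potential_add_period (a := a) hN (y + s * b)
      rw [show y + s * b + b * (x + m * b) = y + (s + (x + m * b)) * b by ring] at h
      have : (0 : ℤ) ≤ b * x := by positivity
      linarith [ih s (by omega)]

theorem maxPotential_eq_max (hN : 0 < x + m * b) (y : ℕ) :
    maxPotential b x a y = max (potential b x a y) (maxPotential b x a (y + b)) := by
  refine le_antisymm ?_ (max_le ?_ ?_)
  · obtain ⟨_ | s, hs⟩ := exists_maxPotential_eq b x a y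
    · simp [hs]
    · rw [hs, show y + (s + 1) * b = y + b + s * b by ring]
      exact le_max_of_le_right (potential_le_maxPotential hN _ s)
  · simpa using potential_le_maxPotential (a := a) hN y 0
  · obtain ⟨s, hs⟩ := exists_maxPotential_eq b x a (y + b)
    rw [hs, show y + b + s * b = y + (s + 1) * b by ring]
    exact potential_le_maxPotential hN y (s + 1)

theorem isGoodStart_iff_maxPotential (hb : 0 < b) (hN : 0 < x + m * b) (d : ℕ) :
    IsGoodStart b x a d ↔ maxPotential b x a (d + b) + b ≤ potential b x a d := by
  rw [isGoodStart_iff_potential hb hN]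
  constructor
  · intro h
    obtain ⟨s, hs⟩ := exists_maxPotential_eq b x a (d + b)
    rw [hs, show d + b + s * b = d + (s + 1) * b by ring]
    exact h (s + 1) (by omega)
  · intro h t ht
    obtain ⟨s, rfl⟩ : ∃ s, t = s + 1 := ⟨t - 1, by omega⟩
    have := potential_le_maxPotential (a := a) hN (d + b) s
    rw [show d + b + s * b = d + (s + 1) * b by ring] at this
    linarith

theorem maxPotential_sub_maxPotential_add (hb : 0 < b) (hN : 0 < x + m * b) (y : ℕ) :
    maxPotential b x a y - maxPotential b x a (y + b) =
      if IsGoodStart b x a y then (b : ℤ) else 0 := by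
  rw [maxPotential_eq_max hN]
  have hle : potential b x a y ≤ maxPotential b x a (y + b) + b := by
    have := potential_le_maxPotential (a := a) hN (y + b) 0
    rw [zero_mul, add_zero] at this
    linarith [potential_le_potential_add b x a y]
  -- both sides are congruent to `-y` modulo `b`
  obtain ⟨s, hs⟩ := exists_maxPotential_eq b x a (y + b)
  obtain ⟨k, hk⟩ : ∃ k : ℤ, potential b x a y - maxPotential b x a (y + b) = b * k :=
    ⟨liftCount (x + m * b) a y - liftCount (x + m * b) a (y + b + s * b) + 1 + s, by
      rw [hs]; simp only [potential]; push_cast; ring⟩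
  have hb' : (0 : ℤ) < b := by exact_mod_cast hb
  by_cases h : IsGoodStart b x a y
  · have h' := (isGoodStart_iff_maxPotential hb hN y).1 h
    rw [if_pos h, max_eq_left (by linarith)]
    linarith
  · have h' := mt (isGoodStart_iff_maxPotential hb hN y).2 h
    have hk0 : k ≤ 0 := by
      by_contra hk0
      nlinarith
    have : b * k ≤ 0 := mul_nonpos_of_nonneg_of_nonpos hb'.le hk0
    rw [if_neg h, max_eq_right (by linarith), sub_self]

theorem maxPotential_add_period (hN : 0 < x + m * b) (y : ℕ) :
    maxPotential b x a (y + b * (x + m * b)) = maxPotential b x a y - b * x := by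
  have hshift : ∀ t, y + b * (x + m * b) + t * b = y + t * b + b * (x + m * b) := fun t => by ring
  apply le_antisymm
  · obtain ⟨t, ht⟩ := exists_maxPotential_eq b x a (y + b * (x + m * b))
    rw [ht, hshift, potential_add_period hN]
    linarith [potential_le_maxPotential (a := a) hN y t]
  · obtain ⟨t, ht⟩ := exists_maxPotential_eq b x a y
    have := potential_le_maxPotential (a := a) hN (y + b * (x + m * b)) t
    rw [hshift, potential_add_period hN] at this
    linarith

theorem card_isGoodStart_add_mul (hb : 0 < b) (hN : 0 < x + m * b) (y : ℕ) :
    #{t ∈ range (x + m * b) | IsGoodStart b x a (y + t * b)} = x := by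
  have key : (b : ℤ) * #{t ∈ range (x + m * b) | IsGoodStart b x a (y + t * b)} =
      ∑ t ∈ range (x + m * b),
        (maxPotential b x a (y + t * b) - maxPotential b x a (y + (t + 1) * b)) := by
    rw [card_filter, Nat.cast_sum, mul_sum]
    refine sum_congr rfl fun t _ => ?_
    rw [show y + (t + 1) * b = y + t * b + b by ring, maxPotential_sub_maxPotential_add hb hN]
    split_ifs <;> simp
  rw [sum_range_sub' (fun t => maxPotential b x a (y + t * b)), zero_mul, add_zero,
    mul_comm (x + m * b), maxPotential_add_period hN, sub_sub_cancel] at key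
  exact_mod_cast mul_left_cancel₀ (by positivity) key

theorem isGoodStart_add_period (hN : 0 < x + m * b) (d : ℕ) :
    IsGoodStart b x a (d + (x + m * b)) ↔ IsGoodStart b x a d := by
  have h : ∀ y, liftCount (x + m * b) a (y + (x + m * b)) = liftCount (x + m * b) a y + m :=
    fun y => by simpa using liftCount_add_mul hN a y 1
  simp only [IsGoodStart, add_right_comm d (x + m * b), h]
  exact forall_congr' fun t => by omega

theorem sum_range_mul {M : Type*} [AddCommMonoid M] (f : ℕ → M) (k n : ℕ) :
    ∑ z ∈ range (k * n), f z = ∑ i ∈ range k, ∑ d ∈ range n, f (i * n + d) := by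
  induction k with
  | zero => simp
  | succ k ih => rw [Nat.succ_mul, sum_range_add, ih, sum_range_succ]

theorem card_isGoodStart (hb : 0 < b) (hN : 0 < x + m * b) :
    #{d ∈ range (x + m * b) | IsGoodStart b x a d} = x := by
  have periodic : ∀ i d, IsGoodStart b x a (i * (x + m * b) + d) ↔ IsGoodStart b x a d := by
    intro i d
    induction i with
    | zero => simp
    | succ i ih => rw [add_mul, one_mul, add_right_comm, isGoodStart_add_period hN, ih]
  -- count the good points of `[0, b (x + m b))` along residues modulo `x + m b`, then modulo `b`
  suffices b * #{d ∈ range (x + m * b) | IsGoodStart b x a d} = b * x from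
    Nat.eq_of_mul_eq_mul_left hb this
  calc b * #{d ∈ range (x + m * b) | IsGoodStart b x a d}
      = ∑ z ∈ range (b * (x + m * b)), if IsGoodStart b x a z then 1 else 0 := by
        rw [card_filter, sum_range_mul]
        simp only [periodic, sum_const, card_range, smul_eq_mul]
    _ = ∑ y ∈ range b, #{t ∈ range (x + m * b) | IsGoodStart b x a (y + t * b)} := by
        rw [mul_comm, sum_range_mul, sum_comm]
        simp_rw [card_filter, add_comm (_ * b)]
    _ = b * x := by
        rw [sum_congr rfl fun y _ => card_isGoodStart_add_mul hb hN y, sum_const, card_range,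
          smul_eq_mul]

end CycleLemma

section Parking

variable {m : ℕ}

/-- `x`-parking functions with step `b`, car `j` preferring spot `h j + 1`. -/
def IsParking (x b : ℕ) (h : Fin m → ℕ) : Prop :=
  ∀ i : Fin m, (i : ℕ) + 1 ≤ #{j | h j + 1 ≤ x + i * b}

instance (x b : ℕ) : DecidablePred (IsParking (m := m) x b) :=
  fun _ => inferInstanceAs (Decidable (∀ _, _))

theorem mem_abpf1 {b : ℕ} {π : Fin m → Fin (1 + (m - 1) * b)} :
    π ∈ abpf1 b m ↔ IsParking 1 b fun j => π j := by
  simp [abpf1, IsParking]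

theorem isParking_iff_card_lt {x b : ℕ} {h : Fin m → ℕ} :
    IsParking x b h ↔ ∀ i : Fin m, #{j | x + i * b ≤ h j} < m - i := by
  refine forall_congr' fun i => ?_
  have hsplit := card_filter_add_card_filter_not (s := univ)
    (p := fun j => h j + 1 ≤ x + i * b)
  simp only [not_le, Nat.lt_iff_add_one_le, card_univ, Fintype.card_fin] at hsplit
  have : #{j | x + i * b ≤ h j} = #{j | x + i * b + 1 ≤ h j + 1} := by simp
  omega

theorem val_add_one_le_of_isParking {x b : ℕ} {h : Fin m → ℕ} (hh : IsParking x b h)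
    (j : Fin m) : h j + 1 ≤ x + (m - 1) * b := by
  have hm : 0 < m := j.pos
  have hcard := hh ⟨m - 1, by omega⟩
  simp only [Nat.sub_add_cancel hm] at hcard
  have hall := eq_univ_of_card _
    (le_antisymm (card_le_univ _) (by rwa [Fintype.card_fin]))
  exact filter_eq_self.1 hall j (mem_univ j)

theorem card_filter_val {N : ℕ} [NeZero N] (P : ℕ → Prop) [DecidablePred P] :
    #{z : ZMod N | P z.val} = #{n ∈ range N | P n} := by
  refine card_nbij' ZMod.val (↑) (fun z hz => ?_) (fun n hn => ?_)
    (fun z _ => ZMod.natCast_zmod_val z)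
    (fun n hn => ZMod.val_cast_of_lt (mem_range.1 (mem_filter.1 hn).1))
  · simp_all [ZMod.val_lt]
  · simp only [coe_filter, mem_range, Set.mem_ofPred_eq, mem_univ, true_and] at hn ⊢
    rw [ZMod.val_cast_of_lt hn.1]
    exact hn.2

variable {b x : ℕ}

theorem isParking_add_iff [NeZero (x + m * b)] (g : Fin m → ZMod (x + m * b))
    (c : ZMod (x + m * b)) :
    IsParking x b (fun j => (g j + c).val) ↔ IsGoodStart b x (fun j => (g j).val) c.val := by
  have hN : 0 < x + m * b := NeZero.pos _
  have window : ∀ t ≤ m, liftCount (x + m * b) (fun j => (g j).val) (c.val + t * b) =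
      liftCount (x + m * b) (fun j => (g j).val) c.val +
        #{j | x + (m - t) * b ≤ (g j + c).val} := by
    intro t ht
    have htb : (m - t) * b + t * b = m * b := by rw [← add_mul, Nat.sub_add_cancel ht]
    rw [liftCount_add hN _ _ (by nlinarith)]
    congr 2
    exact filter_congr fun j _ => by rw [← ZMod.val_add]; omega
  rw [isParking_iff_card_lt]
  constructor
  · intro h t ht1 htm
    have := h ⟨m - t, by omega⟩
    rw [window t htm]
    simp only [Nat.sub_sub_self htm] at this
    omega
  · intro h i
    have := h (m - i) (by omega) (by omega)
    rw [window _ (by omega), Nat.sub_sub_self i.is_le'] at this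
    omega

theorem card_isParking_add (hb : 0 < b) [NeZero (x + m * b)] (g : Fin m → ZMod (x + m * b)) :
    #{c | IsParking x b (fun j => (g j + c).val)} = x := by
  simp_rw [isParking_add_iff]
  rw [card_filter_val (IsGoodStart b x fun j => (g j).val)]
  exact card_isGoodStart hb (NeZero.pos _)

end Parking

section Orbits

variable {m b x : ℕ}

/-- Averaging a shift-invariant weight over all functions: each orbit of the shift action has
`x + m * b` elements, exactly `x` of which are `x`-parking functions. -/
theorem nsmul_sum_eq_nsmul_sum_isParking {R : Type*} [AddCommMonoid R] (hb : 0 < b)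
    [NeZero (x + m * b)] (F : (Fin m → ZMod (x + m * b)) → R)
    (hF : ∀ f c, F (fun j => f j + c) = F f) :
    x • ∑ f, F f = (x + m * b) • ∑ f with IsParking x b (fun j => (f j).val), F f := by
  calc x • ∑ f, F f
      = ∑ f, ∑ c, if IsParking x b (fun j => (f j + c).val) then F f else 0 := by
        rw [smul_sum]
        refine sum_congr rfl fun f _ => ?_
        rw [← sum_filter, sum_const, card_isParking_add hb f]
    _ = ∑ c : ZMod (x + m * b), ∑ f : Fin m → ZMod (x + m * b),
          if IsParking x b (fun j => (f j + c).val) then F (fun j => f j + c) else 0 := by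
        rw [sum_comm]
        simp only [hF]
    _ = ∑ _c : ZMod (x + m * b), ∑ f with IsParking x b (fun j => (f j).val), F f := by
        refine sum_congr rfl fun c _ => ?_
        rw [sum_filter]
        exact Fintype.sum_equiv (Equiv.addRight fun _ => c) _ _ fun f => rfl
    _ = _ := by rw [sum_const, card_univ, ZMod.card]

end Orbits

section Projection

variable {m b : ℕ}

theorem card_val_add_one_sub_eq {N q p : ℕ} [NeZero N] (h : p + q ≤ N) :
    #{z : ZMod N | z.val + 1 - q = p} = if p = 0 then q else 1 := by
  rw [card_filter_val (fun n => n + 1 - q = p)]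
  split_ifs with hp
  · rw [show {n ∈ range N | n + 1 - q = p} = range q by ext n; simp; omega, card_range]
  · rw [show {n ∈ range N | n + 1 - q = p} = {p + q - 1} by ext n; simp; omega, card_singleton]

theorem isParking_iff_sub {q : ℕ} {h : Fin m → ℕ} :
    IsParking q b h ↔ IsParking 1 b fun j => h j + 1 - q := by
  refine forall_congr' fun i => ?_
  rw [filter_congr fun j _ => show h j + 1 ≤ q + i * b ↔ h j + 1 - q + 1 ≤ 1 + i * b by omega]

/-- Lowers every value by `q - 1`; the clipping at `(m - 1) * b` only serves to land in
`Fin (1 + (m - 1) * b)` and is inactive on `q`-parking functions. -/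
def project (q : ℕ) (g : Fin m → ZMod (q + m * b)) : Fin m → Fin (1 + (m - 1) * b) :=
  fun j => ⟨min ((g j).val + 1 - q) ((m - 1) * b), by omega⟩

variable {q : ℕ}

theorem project_val {g : Fin m → ZMod (q + m * b)} (hg : IsParking q b fun j => (g j).val)
    (j : Fin m) : (project q g j : ℕ) = (g j).val + 1 - q := by
  have := val_add_one_le_of_isParking hg j
  simp only [project]
  omega

theorem project_mem_abpf1 {g : Fin m → ZMod (q + m * b)} (hg : IsParking q b fun j => (g j).val) :
    project q g ∈ abpf1 b m := by
  rw [mem_abpf1, funext (project_val hg), ← isParking_iff_sub]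
  exact hg

variable [NeZero (q + m * b)]

theorem filter_project_eq {π : Fin m → Fin (1 + (m - 1) * b)} (hπ : π ∈ abpf1 b m) :
    {g ∈ ({g | IsParking q b fun j => (g j).val} : Finset (Fin m → ZMod (q + m * b))) |
        project q g = π} =
      Fintype.piFinset fun j => {z | z.val + 1 - q = π j} := by
  ext g
  simp only [mem_filter, mem_univ, true_and, Fintype.mem_piFinset]
  constructor
  · rintro ⟨hg, rfl⟩ j
    exact (project_val hg j).symm
  · intro h
    have hg : IsParking q b fun j => (g j).val := by
      rw [isParking_iff_sub, funext h]
      exact mem_abpf1.1 hπ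
    exact ⟨hg, funext fun j => Fin.ext ((project_val hg j).trans (h j))⟩

theorem card_filter_project_eq {π : Fin m → Fin (1 + (m - 1) * b)} (hπ : π ∈ abpf1 b m) :
    #{g ∈ ({g | IsParking q b fun j => (g j).val} : Finset (Fin m → ZMod (q + m * b))) |
        project q g = π} = q ^ #{j | (π j : ℕ) = 0} := by
  have hle : (m - 1) * b ≤ m * b := Nat.mul_le_mul_right b (Nat.sub_le m 1)
  rw [filter_project_eq hπ, Fintype.card_piFinset,
    prod_congr rfl fun j _ => card_val_add_one_sub_eq (by have := (π j).isLt; omega),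
    prod_ite, prod_const, prod_const, one_pow, mul_one]

theorem sum_isParking_project {R : Type*} [AddCommMonoid R]
    (F : (Fin m → Fin (1 + (m - 1) * b)) → R) :
    ∑ g with IsParking q b (fun j => (g j).val), F (project q g) =
      ∑ π ∈ abpf1 b m, q ^ #{j | (π j : ℕ) = 0} • F π := by
  rw [← sum_fiberwise_of_maps_to (g := project q) (t := abpf1 b m)
    fun g hg => project_mem_abpf1 (mem_filter.1 hg).2]
  refine sum_congr rfl fun π hπ => ?_
  rw [sum_congr rfl fun g hg => congrArg F (mem_filter.1 hg).2, sum_const,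
    card_filter_project_eq hπ]

end Projection

section GeneratingFunctions

variable {m b : ℕ}

theorem sum_pow_ones_natCast (hb : 0 < b) (hm : 0 < m) (q : ℕ) :
    ∑ π ∈ abpf1 b m, q ^ #{j | (π j : ℕ) = 0} = q * (q + m * b) ^ (m - 1) := by
  have hN : 0 < q + m * b := by have := Nat.mul_pos hm hb; omega
  have : NeZero (q + m * b) := ⟨hN.ne'⟩
  have horbit := nsmul_sum_eq_nsmul_sum_isParking hb (m := m) (x := q) (fun _ => 1) fun _ _ => rfl
  have hproj := sum_isParking_project (m := m) (b := b) (q := q) fun _ => 1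
  simp only [smul_eq_mul, mul_one, sum_const, card_univ, Fintype.card_fun, ZMod.card,
    Fintype.card_fin] at horbit hproj
  apply Nat.eq_of_mul_eq_mul_left hN
  rw [← hproj, ← horbit, ← Nat.sub_add_cancel hm, pow_succ, Nat.add_sub_cancel]
  ring

theorem sum_pow_ones (hb : 0 < b) (hm : 0 < m) (t : ℚ) :
    ∑ π ∈ abpf1 b m, t ^ #{j | (π j : ℕ) = 0} = t * (t + m * b) ^ (m - 1) := by
  open Polynomial in
  have hpoly : ∑ π ∈ abpf1 b m, (X : ℚ[X]) ^ #{j | (π j : ℕ) = 0} =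
      X * (X + C ((m : ℚ) * b)) ^ (m - 1) := by
    refine eq_of_infinite_eval_eq _ _ (Set.infinite_of_injective_forall_mem
      (f := (Nat.cast : ℕ → ℚ)) Nat.cast_injective fun q => ?_)
    simp only [Set.mem_ofPred_eq, eval_finsetSum, eval_pow, eval_X, eval_mul, eval_add, eval_C]
    exact_mod_cast sum_pow_ones_natCast hb hm q
  simpa [Polynomial.eval_finsetSum] using congrArg (Polynomial.eval t) hpoly

theorem sum_pow_card_eq_apply {ι α R : Type*} [Fintype ι] [DecidableEq ι] [Fintype α]
    [DecidableEq α] [CommSemiring R] (i₀ : ι) (t : R) :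
    ∑ f : ι → α, t ^ #{i | f i = f i₀} =
      Fintype.card α * t * (t + (Fintype.card α - 1 : ℕ)) ^ (Fintype.card ι - 1) := by
  have hrow : ∀ v : α, ∑ a : α, (if a = v then t else 1) = t + (Fintype.card α - 1 : ℕ) :=
    fun v => by
      rw [sum_ite, filter_eq', filter_ne', sum_const, sum_const, card_erase_of_mem (mem_univ v)]
      simp
  calc ∑ f : ι → α, t ^ #{i | f i = f i₀}
      = ∑ f : ι → α, t * ∏ j : {j // j ≠ i₀}, if f j = f i₀ then t else 1 := by
        refine sum_congr rfl fun f _ => ?_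
        have hsplit :=
          Fintype.prod_eq_mul_prod_subtype_ne (fun i => if f i = f i₀ then t else 1) i₀
        rw [if_pos rfl] at hsplit
        rw [← hsplit, prod_ite, prod_const, prod_const_one, mul_one]
    _ = ∑ p : α × ({j // j ≠ i₀} → α), t * ∏ j, if p.2 j = p.1 then t else 1 :=
        Fintype.sum_equiv (Equiv.piSplitAt i₀ fun _ => α) _ _ fun f => rfl
    _ = ∑ v : α, t * ∏ _j : {j // j ≠ i₀}, ∑ a : α, if a = v then t else 1 := by
        rw [Fintype.sum_prod_type]
        refine sum_congr rfl fun v _ => ?_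
        rw [Fintype.prod_sum, mul_sum]
    _ = _ := by
        simp_rw [hrow]
        simp [Fintype.card_subtype_compl, mul_assoc]

theorem sum_pow_lel (hb : 0 < b) (hm : 0 < m) (t : ℚ) :
    ∑ π ∈ abpf1 b m, t ^ #{i | π i = π ⟨0, hm⟩} = t * (t + m * b) ^ (m - 1) := by
  have : NeZero (1 + m * b) := ⟨by omega⟩
  have horbit := nsmul_sum_eq_nsmul_sum_isParking hb (m := m) (x := 1)
    (fun f => t ^ #{i | f i = f ⟨0, hm⟩}) fun f c => by simp
  have hproj :=
    sum_isParking_project (m := m) (b := b) (q := 1) fun π => t ^ #{i | π i = π ⟨0, hm⟩}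
  have hlel :
      ∀ g ∈ ({g | IsParking 1 b fun j => (g j).val} : Finset (Fin m → ZMod (1 + m * b))),
      #{i | project 1 g i = project 1 g ⟨0, hm⟩} = #{i | g i = g ⟨0, hm⟩} := by
    intro g hg
    have hg := (mem_filter.1 hg).2
    refine congrArg card (filter_congr fun i _ => ?_)
    rw [Fin.ext_iff, project_val hg, project_val hg, Nat.add_sub_cancel, Nat.add_sub_cancel,
      ZMod.val_injective _ |>.eq_iff]
  rw [sum_congr rfl fun g hg => by rw [hlel g hg]] at hproj
  simp only [one_pow, one_smul, sum_pow_card_eq_apply, ZMod.card, Fintype.card_fin,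
    Nat.add_sub_cancel_left] at hproj horbit
  rw [← hproj]
  apply mul_left_cancel₀ (show ((1 + m * b : ℕ) : ℚ) ≠ 0 by positivity)
  rw [← nsmul_eq_mul, ← horbit]
  push_cast
  ring

end GeneratingFunctions

end ParkingFunction

theorem gf_lel_and_ones_1b (b m : ℕ) (hb : 1 ≤ b) (hm : 1 ≤ m) (t : ℚ) :
    (∑ π ∈ abpf1 b m,
        t ^ (Finset.univ.filter (fun i => π i = π ⟨0, by omega⟩)).card =
      t * (t + m * b) ^ (m - 1)) ∧
    (∑ π ∈ abpf1 b m,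
        t ^ (Finset.univ.filter (fun i => (π i : ℕ) = 0)).card =
      t * (t + m * b) ^ (m - 1)) :=
  ⟨ParkingFunction.sum_pow_lel hb hm t, ParkingFunction.sum_pow_ones hb hm t⟩
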